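/- Let A = {1,...,n}, A' = {1,...,2n}, T(X) := {2a : a ∈ X} ∪ {2a−1 : a ∉ X}, and for each a ∈ A let Z^a := {2a} ∪ {2b−1 : b ∈ A, b ≥ a}, with G' := {Z^a : a ∈ A}. Then ν'(G') ∪ T(P(A)) = τ'(G'), where ν' and τ' are the shift-order versions of the responder and transversal operators on P(A'). -/
import Mathlib


def grnd (n : ℕ) : Finset ℕ := Finset.Icc 1 n

def cnt (X : Finset ℕ) (a : ℕ) : ℕ := (X.filter (fun b => a ≤ b)).card

def shiftLE (n : ℕ) (X Z : Finset ℕ) : Prop :=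
  ∀ a ∈ grnd n, cnt X a ≤ cnt Z a

def Tmap (n : ℕ) (X : Finset ℕ) : Finset ℕ :=
  X.image (fun a => 2 * a) ∪ (grnd n \ X).image (fun a => 2 * a - 1)

/-- Z^a := {2a} ∪ {2b−1 : b ∈ A, b ≥ a}. -/
def Zset (n a : ℕ) : Finset ℕ :=
  insert (2 * a) ((Finset.Icc a n).image (fun b => 2 * b - 1))

/-- G' := {Z^a : a ∈ A}. -/
def Gfam (n : ℕ) : Set (Finset ℕ) := {Z | ∃ a ∈ grnd n, Z = Zset n a}

def nu' (m : ℕ) (H : Set (Finset ℕ)) : Set (Finset ℕ) :=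
  {Z | Z ⊆ grnd m ∧ ∃ X ∈ H, shiftLE m X Z}

def tau' (m : ℕ) (H : Set (Finset ℕ)) : Set (Finset ℕ) :=
  {Z | Z ⊆ grnd m ∧ ∀ X ∈ H, ¬ shiftLE m X (grnd m \ Z)}


lemma cnt_succ (Z : Finset ℕ) (c : ℕ) :
    cnt Z c = cnt Z (c + 1) + (if c ∈ Z then 1 else 0) := by
  unfold cnt
  have h : Z.filter (fun b => c ≤ b) =
      Z.filter (fun b => c + 1 ≤ b) ∪ Z.filter (fun b => b = c) := by
    rw [← Finset.filter_or]
    apply Finset.filter_congr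
    intro x _
    constructor
    · intro h; omega
    · intro h; omega
  rw [h, Finset.card_union_of_disjoint, Finset.filter_eq']
  · split_ifs <;> simp
  · simp [Finset.disjoint_left, Finset.mem_filter]
    intro x _ h1 _ h2
    omega

lemma cnt_mono (Z : Finset ℕ) {c c' : ℕ} (h : c ≤ c') : cnt Z c' ≤ cnt Z c := by
  apply Finset.card_le_card
  intro b hb
  simp only [Finset.mem_filter] at hb ⊢
  exact ⟨hb.1, by omega⟩

lemma cnt_eq_zero {Z : Finset ℕ} {m : ℕ} (hZ : Z ⊆ grnd m) {c : ℕ} (h : m < c) :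
    cnt Z c = 0 := by
  unfold cnt
  rw [Finset.card_eq_zero, Finset.filter_eq_empty_iff]
  intro x hx
  have := hZ hx
  simp [grnd, Finset.mem_Icc] at this
  omega

lemma cnt_grnd (m c : ℕ) (h1 : 1 ≤ c) : cnt (grnd m) c = m + 1 - c := by
  unfold cnt grnd
  have h : (Finset.Icc 1 m).filter (fun b => c ≤ b) = Finset.Icc c m := by
    ext x
    simp [Finset.mem_Icc, Finset.mem_filter]
    omega
  rw [h, Nat.card_Icc]

lemma cnt_sdiff {m : ℕ} {Z : Finset ℕ} (hZ : Z ⊆ grnd m) (c : ℕ) (h1 : 1 ≤ c) :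
    cnt (grnd m \ Z) c + cnt Z c = m + 1 - c := by
  unfold cnt
  have h : (grnd m \ Z).filter (fun b => c ≤ b) =
      (grnd m).filter (fun b => c ≤ b) \ Z.filter (fun b => c ≤ b) := by
    ext x
    simp only [Finset.mem_filter, Finset.mem_sdiff]
    tauto
  rw [h, Finset.card_sdiff_add_card_eq_card
    (Finset.filter_subset_filter _ hZ)]
  exact cnt_grnd m c h1

lemma Zset_cnt (n a c : ℕ) (ha1 : 1 ≤ a) (hc : 1 ≤ c) :
    cnt (Zset n a) c =
      (if c ≤ 2 * a then 1 else 0) + (n + 1 - max a (c / 2 + 1)) := by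
  unfold cnt Zset
  rw [Finset.filter_insert]
  have himg : Finset.filter (fun b => c ≤ b) ((Finset.Icc a n).image (fun b => 2 * b - 1)) =
      ((Finset.Icc a n).filter (fun b => c ≤ 2 * b - 1)).image (fun b => 2 * b - 1) := by
    rw [Finset.filter_image]
  have hfil : (Finset.Icc a n).filter (fun b => c ≤ 2 * b - 1) =
      Finset.Icc (max a (c / 2 + 1)) n := by
    ext b
    simp [Finset.mem_Icc, Finset.mem_filter]
    omega
  have hcard : (((Finset.Icc a n).filter (fun b => c ≤ 2 * b - 1)).image
      (fun b => 2 * b - 1)).card = n + 1 - max a (c / 2 + 1) := by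
    rw [Finset.card_image_of_injOn, hfil, Nat.card_Icc]
    intro x hx y hy hxy
    simp only [Finset.mem_coe, Finset.mem_filter, Finset.mem_Icc] at hx hy
    simp only [] at hxy
    omega
  split_ifs with h
  · rw [himg, Finset.card_insert_of_notMem, hcard]
    · omega
    · simp only [Finset.mem_image, Finset.mem_filter, Finset.mem_Icc]
      rintro ⟨b, ⟨⟨hb1, _⟩, _⟩, hb⟩
      omega
  · rw [himg, hcard]
    omega

lemma shift_iff (n a : ℕ) (W : Finset ℕ) (ha1 : 1 ≤ a) (han : a ≤ n) :
    shiftLE (2 * n) (Zset n a) W ↔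
      (n + 2 ≤ cnt W (2 * a - 1) + a ∧ n + 1 ≤ cnt W (2 * a) + a ∧
        ∀ k, a ≤ k → k < n → n ≤ cnt W (2 * k + 1) + k) := by
  constructor
  · intro h
    refine ⟨?_, ?_, ?_⟩
    · have h1 := h (2 * a - 1) (by simp [grnd, Finset.mem_Icc]; omega)
      rw [Zset_cnt n a _ ha1 (by omega)] at h1
      have hd : (2 * a - 1) / 2 = a - 1 := by omega
      rw [hd] at h1
      rw [if_pos (by omega), Nat.max_eq_left (by omega)] at h1
      omega
    · have h1 := h (2 * a) (by simp [grnd, Finset.mem_Icc]; omega)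
      rw [Zset_cnt n a _ ha1 (by omega)] at h1
      have hd : (2 * a) / 2 = a := by omega
      rw [hd] at h1
      rw [if_pos (by omega), Nat.max_eq_right (by omega)] at h1
      omega
    · intro k hk1 hk2
      have h1 := h (2 * k + 1) (by simp [grnd, Finset.mem_Icc]; omega)
      rw [Zset_cnt n a _ ha1 (by omega)] at h1
      have hd : (2 * k + 1) / 2 = k := by omega
      rw [hd] at h1
      rw [if_neg (by omega), Nat.max_eq_right (by omega)] at h1
      omega
  · rintro ⟨h1, h2, h3⟩
    intro c hc
    simp only [grnd, Finset.mem_Icc] at hc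
    rw [Zset_cnt n a c ha1 hc.1]
    obtain ⟨k, hk | hk⟩ := Nat.even_or_odd' c
    · -- c = 2 * k
      subst hk
      have hd : (2 * k) / 2 = k := by omega
      rw [hd]
      rcases lt_trichotomy k a with hka | hka | hka
      · rw [if_pos (by omega), Nat.max_eq_left (by omega)]
        have hm : cnt W (2 * a - 1) ≤ cnt W (2 * k) := cnt_mono W (by omega)
        omega
      · subst hka
        rw [if_pos (by omega), Nat.max_eq_right (by omega)]
        omega
      · rw [if_neg (by omega), Nat.max_eq_right (by omega)]
        by_cases hkn : k < n
        · have hm : cnt W (2 * k + 1) ≤ cnt W (2 * k) := cnt_mono W (by omega)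
          have := h3 k (by omega) hkn
          omega
        · omega
    · -- c = 2 * k + 1
      subst hk
      have hd : (2 * k + 1) / 2 = k := by omega
      rw [hd]
      rcases lt_or_ge k a with hka | hka
      · rw [if_pos (by omega), Nat.max_eq_left (by omega)]
        have hm : cnt W (2 * a - 1) ≤ cnt W (2 * k + 1) := cnt_mono W (by omega)
        omega
      · rw [if_neg (by omega), Nat.max_eq_right (by omega)]
        by_cases hkn : k < n
        · have := h3 k hka hkn
          omega
        · omega

lemma Tmap_subset (n : ℕ) (X : Finset ℕ) (hX : X ⊆ grnd n) :
    Tmap n X ⊆ grnd (2 * n) := by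
  intro x hx
  simp only [Tmap, Finset.mem_union, Finset.mem_image, Finset.mem_sdiff] at hx
  simp only [grnd, Finset.mem_Icc] at *
  rcases hx with ⟨a, ha, rfl⟩ | ⟨a, ⟨ha, _⟩, rfl⟩
  · have := hX ha
    simp only [grnd, Finset.mem_Icc] at this
    omega
  · omega

lemma Tmap_cnt (n : ℕ) (X : Finset ℕ) (hX : X ⊆ grnd n) (k : ℕ) :
    cnt (Tmap n X) (2 * k + 1) = n - k := by
  unfold cnt Tmap
  rw [Finset.filter_union, Finset.card_union_of_disjoint, Finset.filter_image,
    Finset.filter_image, Finset.card_image_of_injOn, Finset.card_image_of_injOn]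
  · have h1 : X.filter (fun b => 2 * k + 1 ≤ 2 * b) = X.filter (fun b => k + 1 ≤ b) := by
      apply Finset.filter_congr; intro x _; constructor <;> · intro; omega
    have h2 : (grnd n \ X).filter (fun b => 2 * k + 1 ≤ 2 * b - 1) =
        (grnd n \ X).filter (fun b => k + 1 ≤ b) := by
      apply Finset.filter_congr
      intro x hx
      simp only [grnd, Finset.mem_sdiff, Finset.mem_Icc] at hx
      constructor <;> · intro; omega
    rw [h1, h2]
    have h3 : (grnd n \ X).filter (fun b => k + 1 ≤ b) =
        (grnd n).filter (fun b => k + 1 ≤ b) \ X.filter (fun b => k + 1 ≤ b) := by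
      ext x
      simp only [Finset.mem_filter, Finset.mem_sdiff]
      tauto
    rw [h3]
    have h5 := Finset.card_sdiff_add_card_eq_card
      (Finset.filter_subset_filter (fun b => k + 1 ≤ b) hX)
    have h4 : (grnd n).filter (fun b => k + 1 ≤ b) = Finset.Icc (k + 1) n := by
      ext x
      simp [grnd, Finset.mem_Icc]
      omega
    have h6 : ((grnd n).filter (fun b => k + 1 ≤ b)).card = n + 1 - (k + 1) := by
      rw [h4, Nat.card_Icc]
    omega
  · intro x hx y hy hxy
    simp only [Finset.coe_filter, Set.mem_setOf_eq, grnd, Finset.mem_sdiff,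
      Finset.mem_Icc] at hx hy
    simp only [] at hxy
    omega
  · intro x hx y hy hxy
    simp only [] at hxy
    omega
  · simp only [Finset.disjoint_left, Finset.mem_filter, Finset.mem_image,
      grnd, Finset.mem_sdiff, Finset.mem_Icc]
    rintro x ⟨⟨a, ha, rfl⟩, _⟩ ⟨⟨b, ⟨⟨hb, _⟩, _⟩, hbe⟩, _⟩
    omega

lemma eq_Tmap (n : ℕ) (Z : Finset ℕ) (hZ : Z ⊆ grnd (2 * n))
    (hs : ∀ k, k ≤ n → cnt Z (2 * k + 1) = n - k) :
    ∃ X, X ⊆ grnd n ∧ Z = Tmap n X := by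
  have hpair : ∀ b, 1 ≤ b → b ≤ n →
      (if 2 * b ∈ Z then 1 else 0) + (if 2 * b - 1 ∈ Z then 1 else 0) = 1 := by
    intro b hb1 hb2
    have e1 := cnt_succ Z (2 * b - 1)
    have e2 := cnt_succ Z (2 * b)
    have hb3 : 2 * b - 1 + 1 = 2 * b := by omega
    rw [hb3] at e1
    have v1 : cnt Z (2 * b - 1) = n - (b - 1) := by
      have := hs (b - 1) (by omega)
      have : 2 * (b - 1) + 1 = 2 * b - 1 := by omega
      rw [← this]
      exact hs (b - 1) (by omega)
    have v2 : cnt Z (2 * b + 1) = n - b := hs b hb2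
    split_ifs at * <;> omega
  refine ⟨(grnd n).filter (fun b => 2 * b ∈ Z), Finset.filter_subset _ _, ?_⟩
  ext x
  simp only [Tmap, Finset.mem_union, Finset.mem_image, Finset.mem_sdiff,
    Finset.mem_filter]
  constructor
  · intro hx
    have hxr := hZ hx
    simp only [grnd, Finset.mem_Icc] at hxr
    obtain ⟨b, hb | hb⟩ := Nat.even_or_odd' x
    · left
      refine ⟨b, ⟨?_, ?_⟩, by omega⟩
      · simp only [grnd, Finset.mem_Icc]; omega
      · rw [← hb]; exact hx
    · right
      refine ⟨b + 1, ⟨?_, ?_⟩, by omega⟩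
      · simp only [grnd, Finset.mem_Icc]; omega
      · rintro ⟨_, hmem⟩
        have hp := hpair (b + 1) (by omega) (by
          simp only [grnd, Finset.mem_Icc] at *; omega)
        have hx' : 2 * (b + 1) - 1 ∈ Z := by
          have : 2 * (b + 1) - 1 = x := by omega
          rw [this]; exact hx
        split_ifs at hp <;> omega
  · rintro (⟨a, ⟨ha, haZ⟩, rfl⟩ | ⟨a, ⟨ha, haX⟩, rfl⟩)
    · exact haZ
    · simp only [grnd, Finset.mem_Icc] at ha
      have hp := hpair a ha.1 ha.2
      have hnotin : 2 * a ∉ Z := by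
        intro hc
        exact haX ⟨by simp only [grnd, Finset.mem_Icc]; omega, hc⟩
      rw [if_neg hnotin] at hp
      split_ifs at hp with h
      · exact h
      · omega

lemma key (n : ℕ) (Z : Finset ℕ) (hZ : Z ⊆ grnd (2*n)) (j : ℕ) (hj : j < n)
    (h1 : cnt Z (2*j+1) < n - j)
    (h2 : ∀ k, j < k → k < n → cnt Z (2*k+1) ≤ n - k) :
    shiftLE (2*n) (Zset n (j+1)) (grnd (2*n) \ Z) := by
  rw [shift_iff n (j+1) _ (by omega) (by omega)]
  have E1 := cnt_sdiff hZ (2*j+1) (by omega)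
  have E2 := cnt_sdiff hZ (2*j+2) (by omega)
  have ht : cnt Z (2*j+2) ≤ cnt Z (2*j+1) := cnt_mono Z (by omega)
  refine ⟨?_, ?_, ?_⟩
  · have e : 2*(j+1)-1 = 2*j+1 := by omega
    rw [e]; omega
  · have e : 2*(j+1) = 2*j+2 := by omega
    rw [e]; omega
  · intro k hk1 hk2
    have E3 := cnt_sdiff hZ (2*k+1) (by omega)
    have := h2 k (by omega) hk2
    omega


theorem stmt17 (n : ℕ) :
    nu' (2 * n) (Gfam n) ∪ {Y | ∃ X : Finset ℕ, X ⊆ grnd n ∧ Y = Tmap n X} =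
      tau' (2 * n) (Gfam n) := by
  ext Z
  simp only [Set.mem_union, Set.mem_setOf_eq, nu', tau']
  constructor
  · rintro (⟨hZsub, X, hXG, hsh⟩ | ⟨X, hX, rfl⟩)
    · -- ν' case
      simp only [Gfam, Set.mem_setOf_eq] at hXG
      obtain ⟨a, haA, rfl⟩ := hXG
      simp only [grnd, Finset.mem_Icc] at haA
      rw [shift_iff n a Z haA.1 haA.2] at hsh
      obtain ⟨F1, F2, F3⟩ := hsh
      refine ⟨hZsub, ?_⟩
      intro X' hX'
      simp only [Gfam, Set.mem_setOf_eq] at hX'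
      obtain ⟨a', ha', rfl⟩ := hX'
      simp only [grnd, Finset.mem_Icc] at ha'
      intro hcon
      rw [shift_iff n a' _ ha'.1 ha'.2] at hcon
      obtain ⟨G1, G2, G3⟩ := hcon
      rcases lt_trichotomy a' a with h | h | h
      · have hg := G3 (a-1) (by omega) (by omega)
        have e : 2*(a-1)+1 = 2*a-1 := by omega
        rw [e] at hg
        have E := cnt_sdiff hZsub (2*a-1) (by omega)
        omega
      · subst h
        have E := cnt_sdiff hZsub (2*a') (by omega)
        omega
      · have hf := F3 (a'-1) (by omega) (by omega)
        have e : 2*(a'-1)+1 = 2*a'-1 := by omega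
        rw [e] at hf
        have E := cnt_sdiff hZsub (2*a'-1) (by omega)
        omega
    · -- Tmap case
      have hsub := Tmap_subset n X hX
      refine ⟨hsub, ?_⟩
      intro X' hX'
      simp only [Gfam, Set.mem_setOf_eq] at hX'
      obtain ⟨a', ha', rfl⟩ := hX'
      simp only [grnd, Finset.mem_Icc] at ha'
      intro hcon
      rw [shift_iff n a' _ ha'.1 ha'.2] at hcon
      obtain ⟨G1, _, _⟩ := hcon
      have hv := Tmap_cnt n X hX (a'-1)
      have e : 2*(a'-1)+1 = 2*a'-1 := by omega
      rw [e] at hv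
      have E := cnt_sdiff hsub (2*a'-1) (by omega)
      omega
  · rintro ⟨hZsub, hτ⟩
    have hτ' : ∀ a, 1 ≤ a → a ≤ n → ¬ shiftLE (2*n) (Zset n a) (grnd (2*n) \ Z) := by
      intro a h1 h2
      exact hτ (Zset n a) ⟨a, by simp only [grnd, Finset.mem_Icc]; omega, rfl⟩
    have key' : ∀ j, j < n → cnt Z (2*j+1) < n - j →
        (∀ k, j < k → k < n → cnt Z (2*k+1) ≤ n - k) → False := by
      intro j hj h1 h2
      exact hτ' (j+1) (by omega) (by omega) (key n Z hZsub j hj h1 h2)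
    by_cases hA : ∃ m, m < n ∧ n - m < cnt Z (2*m+1)
    · left
      obtain ⟨m0, hm0⟩ := hA
      set m := Nat.findGreatest (fun k => n - k < cnt Z (2*k+1)) (n-1) with hm
      have hPm : n - m < cnt Z (2*m+1) := by
        rw [hm]
        exact Nat.findGreatest_spec (P := fun k => n - k < cnt Z (2*k+1)) (m := m0) (by omega) hm0.2
      have hmle : m ≤ n - 1 := by rw [hm]; exact Nat.findGreatest_le (n-1)
      have hmlt : m < n := by omega
      have hub : ∀ k, m < k → k < n → cnt Z (2*k+1) ≤ n - k := by
        intro k h1 h2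
        by_contra hcon
        have hgr := Nat.findGreatest_is_greatest
          (k := k) (P := fun k => n - k < cnt Z (2*k+1)) (n := n-1)
          (by rw [← hm]; exact h1) (by omega)
        exact hgr (by omega)
      have heq : ∀ k, m < k → k < n → cnt Z (2*k+1) = n - k := by
        intro k h1 h2
        have hle := hub k h1 h2
        by_contra hne'
        exact key' k h2 (by omega) (fun k' hk1 hk2 => hub k' (by omega) hk2)
      refine ⟨hZsub, Zset n (m+1),
        ⟨m+1, by simp only [grnd, Finset.mem_Icc]; omega, rfl⟩, ?_⟩
      rw [shift_iff n (m+1) Z (by omega) (by omega)]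
      refine ⟨?_, ?_, ?_⟩
      · have e : 2*(m+1)-1 = 2*m+1 := by omega
        rw [e]; omega
      · have e1 := cnt_succ Z (2*m+1)
        have e2 : 2*m+1+1 = 2*(m+1) := by omega
        rw [e2] at e1
        split_ifs at e1 <;> omega
      · intro k hk1 hk2
        have := heq k (by omega) hk2
        omega
    · push_neg at hA
      right
      have hall : ∀ k, k ≤ n → cnt Z (2*k+1) = n - k := by
        intro k hk
        rcases Nat.lt_or_ge k n with h | h
        · have hle := hA k h
          by_contra hne'
          exact key' k h (by omega) (fun k' hk1 hk2 => hA k' hk2)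
        · have h1 : cnt Z (2*n+1) = 0 := cnt_eq_zero hZsub (by omega)
          have h2 : k = n := by omega
          subst h2; omega
      obtain ⟨X, hX, hZeq⟩ := eq_Tmap n Z hZsub hall
      exact ⟨X, hX, hZeq⟩
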